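/- Let 0 < p < 1 and let W = {w_{jk}}_{j,k≥0} be a matrix in 𝒲_p. Assume that |w_{jk}| ≥ 1 for all (j,k) in a finite subset Λ of ℕ×ℕ. Then ‖W‖_{𝒲_p} ≥ |Λ|^{(1−p)/(2p)}, where |Λ| is the number of elements of Λ. -/

import Mathlib

/-!
For `(j, k) ∈ Λ`, the triangle inequality, subadditivity of `t ↦ t ^ p` and Cauchy–Schwarz give
`1 ≤ |w_{jk}| ^ (2p) ≤ s_j t_k`, where `s_j = ∑_l |x_{jl}| ^ (2p)` and `t_k = ∑_l |y_{kl}| ^ (2p)`.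
Raising to the power `1/(1-p)` and summing over `Λ ⊆ ℕ × ℕ` gives
`|Λ| ≤ (∑_j s_j ^ (1/(1-p))) (∑_k t_k ^ (1/(1-p)))`, which is `(‖X‖_{Ξ_p} ‖Y‖_{Ξ_p}) ^ (2p/(1-p))`.
-/

open scoped BigOperators

/-- The `Ξ_p = ℓ^{2p♯}(ℓ^{2p})` norm of a matrix,
`‖X‖_{Ξ_p} = (∑_j (∑_k |x_{jk}|^{2p})^{1/(1-p)})^{(1-p)/(2p)}`. -/
noncomputable def xiNorm (p : ℝ) (X : ℕ → ℕ → ℂ) : ℝ :=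
  (∑' j, (∑' k, ‖X j k‖ ^ (2 * p)) ^ (1 / (1 - p))) ^ ((1 - p) / (2 * p))

/-- `X` has finite `Ξ_p`-norm: all the sums defining `xiNorm` converge. -/
def HasXiNorm (p : ℝ) (X : ℕ → ℕ → ℂ) : Prop :=
  (∀ j, Summable fun k => ‖X j k‖ ^ (2 * p)) ∧
    Summable fun j => (∑' k, ‖X j k‖ ^ (2 * p)) ^ (1 / (1 - p))

/-- The set of values `‖X‖_{Ξ_p} ‖Y‖_{Ξ_p}` over all factorizations `W = X Yᵗ`,
i.e. `w_{jk} = ∑_l x_{jl} y_{kl}`, with `X, Y` of finite `Ξ_p`-norm.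
`W ∈ 𝒲_p` iff this set is nonempty, and `‖W‖_{𝒲_p}` is its infimum. -/
noncomputable def wReprVals (p : ℝ) (W : ℕ → ℕ → ℂ) : Set ℝ :=
  {c | ∃ X Y : ℕ → ℕ → ℂ, HasXiNorm p X ∧ HasXiNorm p Y ∧
    (∀ j k, HasSum (fun l => X j l * Y k l) (W j k)) ∧
    c = xiNorm p X * xiNorm p Y}

theorem Real.rpow_tsum_le_tsum_rpow {ι : Type*} {q : ℝ} (hq0 : 0 < q) (hq1 : q ≤ 1)
    {f : ι → ℝ} (hf : ∀ i, 0 ≤ f i) (hfq : Summable fun i => f i ^ q) :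
    (∑' i, f i) ^ q ≤ ∑' i, f i ^ q := by
  have hS : 0 ≤ ∑' i, f i ^ q := tsum_nonneg fun i => Real.rpow_nonneg (hf i) q
  rw [← Real.le_rpow_inv_iff_of_pos (tsum_nonneg hf) hS hq0]
  refine tsum_le_of_sum_le' (Real.rpow_nonneg hS _) fun s => ?_
  rw [Real.le_rpow_inv_iff_of_pos (Finset.sum_nonneg fun i _ => hf i) hS hq0]
  calc (∑ i ∈ s, f i) ^ q ≤ ∑ i ∈ s, f i ^ q :=
        Finset.le_sum_of_subadditive_on_pred (· ^ q) (0 ≤ ·) (by simp [hq0.ne'])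
          (fun a b ha hb => Real.rpow_add_le_add_rpow ha hb hq0.le hq1)
          (fun _ _ => add_nonneg) f fun i _ => hf i
    _ ≤ ∑' i, f i ^ q := hfq.sum_le_tsum s fun i _ => Real.rpow_nonneg (hf i) q

theorem HasSum.norm_rpow_two_mul_le {ι 𝕜 : Type*} [RCLike 𝕜] {p : ℝ} (hp0 : 0 < p)
    (hp1 : p ≤ 1) {x y : ι → 𝕜} {w : 𝕜} (hw : HasSum (fun l => x l * y l) w)
    (hx : Summable fun l => ‖x l‖ ^ (2 * p)) (hy : Summable fun l => ‖y l‖ ^ (2 * p)) :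
    ‖w‖ ^ (2 * p) ≤ (∑' l, ‖x l‖ ^ (2 * p)) * ∑' l, ‖y l‖ ^ (2 * p) := by
  have hsq : ∀ a : ℝ, 0 ≤ a → (a ^ p) ^ (2 : ℝ) = a ^ (2 * p) := fun a ha => by
    rw [← Real.rpow_mul ha, mul_comm]
  obtain ⟨hxy, hholder⟩ := Real.summable_and_inner_le_Lp_mul_Lq_tsum_of_nonneg
    Real.HolderConjugate.two_two (f := fun l => ‖x l‖ ^ p) (g := fun l => ‖y l‖ ^ p)
    (fun l => by positivity) (fun l => by positivity)
    (by simpa only [hsq _ (norm_nonneg _)] using hx)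
    (by simpa only [hsq _ (norm_nonneg _)] using hy)
  simp only [hsq _ (norm_nonneg _)] at hholder
  -- Absolute convergence is automatic in the finite-dimensional space `𝕜`.
  have habs : ‖w‖ ≤ ∑' l, ‖x l‖ * ‖y l‖ := by
    have hxy : Summable fun l => ‖x l * y l‖ := summable_norm_iff.2 hw.summable
    simpa only [hw.tsum_eq, norm_mul] using norm_tsum_le_tsum_norm hxy
  set s := ∑' l, ‖x l‖ ^ (2 * p)
  set t := ∑' l, ‖y l‖ ^ (2 * p)
  have hwp : ‖w‖ ^ p ≤ √s * √t :=
    calc ‖w‖ ^ p ≤ (∑' l, ‖x l‖ * ‖y l‖) ^ p := by gcongr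
      _ ≤ ∑' l, (‖x l‖ * ‖y l‖) ^ p :=
        Real.rpow_tsum_le_tsum_rpow hp0 hp1 (fun l => by positivity)
          (by simpa only [Real.mul_rpow (norm_nonneg _) (norm_nonneg _)] using hxy)
      _ = ∑' l, ‖x l‖ ^ p * ‖y l‖ ^ p := by
        simp only [Real.mul_rpow (norm_nonneg _) (norm_nonneg _)]
      _ ≤ √s * √t := by simpa only [Real.sqrt_eq_rpow] using hholder
  calc ‖w‖ ^ (2 * p) = (‖w‖ ^ p) ^ 2 := by
        rw [mul_comm, Real.rpow_mul (norm_nonneg _), Real.rpow_two]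
    _ ≤ (√s * √t) ^ 2 := by gcongr
    _ = s * t := by
        rw [mul_pow, Real.sq_sqrt (tsum_nonneg fun l => by positivity),
          Real.sq_sqrt (tsum_nonneg fun l => by positivity)]

theorem Finset.card_le_tsum_mul_tsum {α β : Type*} {Λ : Finset (α × β)} {a : α → ℝ} {b : β → ℝ}
    (ha : 0 ≤ a) (hb : 0 ≤ b) (ha' : Summable a) (hb' : Summable b)
    (hΛ : ∀ ij ∈ Λ, 1 ≤ a ij.1 * b ij.2) : (Λ.card : ℝ) ≤ (∑' i, a i) * ∑' j, b j := by
  have hab := ha'.mul_of_nonneg hb' ha hb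
  calc (Λ.card : ℝ) = ∑ _ ∈ Λ, (1 : ℝ) := by simp
    _ ≤ ∑ ij ∈ Λ, a ij.1 * b ij.2 := Finset.sum_le_sum hΛ
    _ ≤ ∑' ij : α × β, a ij.1 * b ij.2 :=
      hab.sum_le_tsum Λ fun ij _ => mul_nonneg (ha _) (hb _)
    _ = (∑' i, a i) * ∑' j, b j := (ha'.tsum_mul_tsum hb' hab).symm

/-- Corollary 6.7: for `0 < p < 1`, if `W ∈ 𝒲_p` and `|w_{jk}| ≥ 1` on a finite set `Λ`,
then `‖W‖_{𝒲_p} ≥ |Λ|^{(1-p)/(2p)}`. -/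
theorem stmt15 (p : ℝ) (hp0 : 0 < p) (hp1 : p < 1)
    (W : ℕ → ℕ → ℂ) (hW : (wReprVals p W).Nonempty)
    (Λ : Finset (ℕ × ℕ)) (hΛ : ∀ jk ∈ Λ, 1 ≤ ‖W jk.1 jk.2‖) :
    (Λ.card : ℝ) ^ ((1 - p) / (2 * p)) ≤ sInf (wReprVals p W) := by
  have hp' : 0 < 1 - p := sub_pos.2 hp1
  refine le_csInf hW ?_
  rintro _ ⟨X, Y, ⟨hXrow, hX⟩, ⟨hYrow, hY⟩, hXY, rfl⟩
  have hrow (Z : ℕ → ℕ → ℂ) (j : ℕ) : 0 ≤ (∑' l, ‖Z j l‖ ^ (2 * p)) ^ (1 / (1 - p)) := by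
    positivity
  have hcard := Finset.card_le_tsum_mul_tsum (Λ := Λ) (hrow X) (hrow Y) hX hY <| by
    rintro ⟨j, k⟩ hjk
    rw [← Real.mul_rpow (by positivity) (by positivity)]
    refine Real.one_le_rpow ?_ (one_div_pos.2 hp').le
    calc 1 ≤ ‖W j k‖ ^ (2 * p) := Real.one_le_rpow (hΛ _ hjk) (by positivity)
      _ ≤ _ := (hXY j k).norm_rpow_two_mul_le hp0 hp1.le (hXrow j) (hYrow k)
  rw [xiNorm, xiNorm, ← Real.mul_rpow (tsum_nonneg (hrow X)) (tsum_nonneg (hrow Y))]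
  exact Real.rpow_le_rpow (Nat.cast_nonneg _) hcard (div_pos hp' (by positivity)).le
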